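/- arXiv:0707.0994 — 3 statements merged into one kernel-verified Lean document; each statement's English description precedes it below -/
import Mathlib

section
/- Suppose the topology of E is generated by an increasing sequence of seminorms (p_n)_{n∈ℕ}. Then for every net (A_ε)_{ε∈(0,1)} of subsets of E, the internal set [(A_ε)] admits the alternative description [(A_ε)] = {u ∈ G_E : for every n ∈ ℕ the net (d_n(u_ε, A_ε))_ε is negligible}, where (u_ε) is any representative of u; in particular, whether (d_n(u_ε, A_ε))_ε is negligible for all n does not depend on the choice of representative (u_ε) of u. -/
open Filter Topology Asymptotics

noncomputable section

namespace ColombeauPaper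

variable {ι κ : Type*} {E : Type*} [AddCommGroup E] [Module ℝ E]
  {F : Type*} [AddCommGroup F] [Module ℝ F]

/-- A net `(u_ε)` in `E` is moderate for the family of seminorms `p` if for every `i`
there is `M ∈ ℕ` with `p i (u_ε) ≤ ε ^ (-M)` for all sufficiently small `ε > 0`. -/
def IsModerate (p : ι → Seminorm ℝ E) (u : ℝ → E) : Prop :=
  ∀ i, ∃ M : ℕ, ∀ᶠ ε in 𝓝[>] (0 : ℝ), p i (u ε) ≤ ε ^ (-(M : ℤ))

/-- A net `(u_ε)` in `E` is negligible if for every `i` and every `m ∈ ℕ` one has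
`p i (u_ε) ≤ ε ^ m` for all sufficiently small `ε > 0`. -/
def IsNegligible (p : ι → Seminorm ℝ E) (u : ℝ → E) : Prop :=
  ∀ i, ∀ m : ℕ, ∀ᶠ ε in 𝓝[>] (0 : ℝ), p i (u ε) ≤ ε ^ m

/-- A negligible net of real numbers. -/
def IsNegligibleR (n : ℝ → ℝ) : Prop :=
  ∀ m : ℕ, ∀ᶠ ε in 𝓝[>] (0 : ℝ), |n ε| ≤ ε ^ m

lemma small_mem : {ε : ℝ | 0 < ε ∧ ε ≤ 1 / 2} ∈ 𝓝[>] (0 : ℝ) := by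
  have h : Set.Ioo (0 : ℝ) (1 / 2) ∈ 𝓝[>] (0 : ℝ) :=
    Ioo_mem_nhdsGT_of_mem ⟨le_refl 0, by norm_num⟩
  filter_upwards [h] with ε hε
  exact ⟨hε.1, hε.2.le⟩

lemma zpow_neg_natCast_eq {ε : ℝ} (k : ℕ) : ε ^ (-(k : ℤ)) = ε⁻¹ ^ (k : ℤ) := by
  rw [zpow_neg, inv_zpow]

/-- The moderate nets form an additive subgroup of `(0,1) → E` (here modelled on `ℝ → E`,
with all conditions holding for sufficiently small `ε > 0`). -/
def moderateGroup (p : ι → Seminorm ℝ E) : AddSubgroup (ℝ → E) where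
  carrier := {u | IsModerate p u}
  zero_mem' := by
    intro i
    refine ⟨0, ?_⟩
    filter_upwards [self_mem_nhdsWithin] with ε hε
    have hε' : (0 : ℝ) < ε := hε
    simp only [Pi.zero_apply, map_zero]
    positivity
  add_mem' := by
    intro u v hu hv i
    obtain ⟨M, hM⟩ := hu i
    obtain ⟨N, hN⟩ := hv i
    refine ⟨max M N + 1, ?_⟩
    filter_upwards [hM, hN, small_mem] with ε h1 h2 h3
    obtain ⟨hε, hε2⟩ := h3
    have hinv : (1 : ℝ) ≤ ε⁻¹ := (one_le_inv₀ hε).2 (by linarith)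
    have h2inv : (2 : ℝ) ≤ ε⁻¹ := by
      nlinarith [mul_inv_cancel₀ (ne_of_gt hε)]
    have key : ∀ k l : ℕ, k ≤ l → ε ^ (-(k : ℤ)) ≤ ε ^ (-(l : ℤ)) := by
      intro k l hkl
      rw [zpow_neg_natCast_eq, zpow_neg_natCast_eq]
      exact zpow_le_zpow_right₀ hinv (by exact_mod_cast hkl)
    set K : ℕ := max M N with hK
    have h1' : p i (u ε) ≤ ε ^ (-(K : ℤ)) := h1.trans (key M K (le_max_left _ _))
    have h2' : p i (v ε) ≤ ε ^ (-(K : ℤ)) := h2.trans (key N K (le_max_right _ _))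
    have tri : p i ((u + v) ε) ≤ p i (u ε) + p i (v ε) := by
      simpa using map_add_le_add (p i) (u ε) (v ε)
    have efin : ε ^ (-(K : ℤ)) * 2 ≤ ε ^ (-((K + 1 : ℕ) : ℤ)) := by
      rw [zpow_neg_natCast_eq, zpow_neg_natCast_eq]
      push_cast
      have hnn : (0:ℝ) ≤ ε⁻¹ ^ (K : ℤ) := by positivity
      calc ε⁻¹ ^ (K : ℤ) * 2 ≤ ε⁻¹ ^ (K : ℤ) * ε⁻¹ :=
            mul_le_mul_of_nonneg_left h2inv hnn
        _ = ε⁻¹ ^ ((K : ℤ) + 1) := by rw [zpow_add₀ (by positivity : (ε⁻¹ : ℝ) ≠ 0), zpow_one]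
    push_cast at efin ⊢
    linarith
  neg_mem' := by
    intro u hu i
    obtain ⟨M, hM⟩ := hu i
    refine ⟨M, ?_⟩
    filter_upwards [hM] with ε h
    simpa [map_neg_eq_map] using h

/-- The negligible nets form an additive subgroup of the moderate ones. -/
def negligibleGroup (p : ι → Seminorm ℝ E) : AddSubgroup (moderateGroup p) where
  carrier := {u | IsNegligible p (u : ℝ → E)}
  zero_mem' := by
    intro i m
    filter_upwards [self_mem_nhdsWithin] with ε hε
    have hε' : (0 : ℝ) < ε := hε
    simp only [AddSubgroup.coe_zero, Pi.zero_apply, map_zero]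
    positivity
  add_mem' := by
    intro u v hu hv i m
    filter_upwards [hu i (m + 1), hv i (m + 1), small_mem] with ε h1 h2 h3
    obtain ⟨hε, hε2⟩ := h3
    have tri : p i (((u + v : moderateGroup p) : ℝ → E) ε)
        ≤ p i ((u : ℝ → E) ε) + p i ((v : ℝ → E) ε) := by
      simpa using map_add_le_add (p i) ((u : ℝ → E) ε) ((v : ℝ → E) ε)
    have hpow : ε ^ (m + 1) = ε ^ m * ε := pow_succ ε m
    nlinarith [pow_nonneg hε.le m]
  neg_mem' := by
    intro u hu i m
    filter_upwards [hu i m] with ε h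
    have : ((-u : moderateGroup p) : ℝ → E) ε = -((u : ℝ → E) ε) := rfl
    rw [this, map_neg_eq_map]
    exact h

/-- The Colombeau space based on `E` (with the family of seminorms `p`):
the quotient of the moderate nets by the negligible ones. -/
abbrev Colombeau (p : ι → Seminorm ℝ E) : Type _ :=
  moderateGroup p ⧸ negligibleGroup p

/-- The internal subset of `𝒢_E` generated by a net `(A_ε)` of subsets of `E`:
all `u` having a representative `(u_ε)` with `u_ε ∈ A_ε` for sufficiently small `ε`. -/
def internalSet (p : ι → Seminorm ℝ E) (A : ℝ → Set E) : Set (Colombeau p) :=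
  {u | ∃ w : moderateGroup p, (QuotientAddGroup.mk w : Colombeau p) = u ∧
        ∀ᶠ ε in 𝓝[>] (0 : ℝ), (w : ℝ → E) ε ∈ A ε}

/-- A subset of `𝒢_E` is internal if it is generated by some net of subsets of `E`. -/
def IsInternal (p : ι → Seminorm ℝ E) (A : Set (Colombeau p)) : Prop :=
  ∃ Anet : ℝ → Set E, A = internalSet p Anet

/-- `d_i(u, A) = inf_{v ∈ A} p_i (u - v)`, with value `+∞` for `A = ∅`. -/
def semiDist (p : ι → Seminorm ℝ E) (i : ι) (u : E) (A : Set E) : EReal :=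
  ⨅ v ∈ A, ((p i (u - v) : ℝ) : EReal)

/-- A sharply bounded net of subsets of `E`. -/
def SharplyBoundedNet (p : ι → Seminorm ℝ E) (A : ℝ → Set E) : Prop :=
  ∀ i, ∃ M : ℕ, ∀ᶠ ε in 𝓝[>] (0 : ℝ), ∀ w ∈ A ε, p i w ≤ ε ^ (-(M : ℤ))

/-- `p_i(u) ≤ α ^ t` in `ℝ̃` (where `α` is the class of `(ε)_ε`): some representative of the
net of seminorms is bounded by `ε ^ t` up to a negligible net for small `ε`. -/
def seminormLeAlpha (p : ι → Seminorm ℝ E) (i : ι) (u : Colombeau p) (t : ℝ) : Prop :=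
  ∃ (w : moderateGroup p) (n : ℝ → ℝ), (QuotientAddGroup.mk w : Colombeau p) = u ∧
    IsNegligibleR n ∧ ∀ᶠ ε in 𝓝[>] (0 : ℝ), p i ((w : ℝ → E) ε) ≤ ε ^ t + n ε

/-- The ultra-pseudo-seminorm `u ↦ |p_i(u)|_s = e^{-ν(p_i(u))}` on `𝒢_E`, where
`ν(x) = sup {b : |x_ε| = O(ε^b)}` is the valuation. -/
def sharpSemi (p : ι → Seminorm ℝ E) (i : ι) (u : Colombeau p) : ℝ :=
  sInf {r : ℝ | ∃ (b : ℝ) (w : moderateGroup p), (QuotientAddGroup.mk w : Colombeau p) = u ∧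
    r = Real.exp (-b) ∧ (fun ε => (p i ((w : ℝ → E) ε) : ℝ)) =O[𝓝[>] (0 : ℝ)] fun ε => ε ^ b}

/-- The sharp topology on `𝒢_E`: the topology generated by the ultra-pseudo-seminorms
`u ↦ |p_i(u)|_s`, i.e. generated by all the corresponding balls. -/
def sharpTopology (p : ι → Seminorm ℝ E) : TopologicalSpace (Colombeau p) :=
  TopologicalSpace.generateFrom
    {B | ∃ (u : Colombeau p) (i : ι) (r : ℝ), 0 < r ∧
          B = {v | sharpSemi p i (v - u) < r}}

lemma indicator_norm_le_one (S : Set ℝ) (ε : ℝ) :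
    ‖S.indicator (fun _ => (1 : ℝ)) ε‖ ≤ 1 := by
  by_cases h : ε ∈ S <;>
    simp [Set.indicator_of_mem, Set.indicator_of_notMem, h]

lemma eAux_le (p : ι → Seminorm ℝ E) (S : Set ℝ) (i : ι) (ε : ℝ) (x : E) :
    p i (S.indicator (fun _ => (1 : ℝ)) ε • x) ≤ p i x := by
  rw [map_smul_eq_mul]
  calc ‖S.indicator (fun _ => (1 : ℝ)) ε‖ * p i x ≤ 1 * p i x :=
        mul_le_mul_of_nonneg_right (indicator_norm_le_one S ε) (apply_nonneg _ _)
    _ = p i x := one_mul _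

/-- Multiplication by the characteristic function `χ_S`, on representatives. -/
def eAux (p : ι → Seminorm ℝ E) (S : Set ℝ) : moderateGroup p →+ moderateGroup p where
  toFun u := ⟨fun ε => S.indicator (fun _ => (1 : ℝ)) ε • (u : ℝ → E) ε, by
    have hu : IsModerate p (u : ℝ → E) := u.2
    intro i
    obtain ⟨M, hM⟩ := hu i
    refine ⟨M, ?_⟩
    filter_upwards [hM] with ε hε
    exact (eAux_le p S i ε _).trans hε⟩
  map_zero' := by
    apply Subtype.ext
    funext ε
    simp
  map_add' u v := by
    apply Subtype.ext
    funext ε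
    simp [smul_add]

/-- Multiplication by `e_S`, the class of the characteristic function of `S ⊆ (0,1)`,
as a map `𝒢_E → 𝒢_E`. -/
def eMul (p : ι → Seminorm ℝ E) (S : Set ℝ) : Colombeau p →+ Colombeau p :=
  QuotientAddGroup.map _ _ (eAux p S) (by
    intro u hu
    rw [AddSubgroup.mem_comap]
    have hu' : IsNegligible p (u : ℝ → E) := hu
    show IsNegligible p _
    intro i m
    filter_upwards [hu' i m] with ε hε
    exact (eAux_le p S i ε _).trans hε)

/-- The set of finite interleavings `∑_{j=1}^m e_{S_j} a_j` of elements of `A`,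
over partitions `{S_1, …, S_m}` of `(0,1)`. -/
def interleaving (p : ι → Seminorm ℝ E) (A : Set (Colombeau p)) : Set (Colombeau p) :=
  {u | ∃ (m : ℕ) (S : Fin m → Set ℝ) (a : Fin m → Colombeau p),
        (∀ j, a j ∈ A) ∧ (∀ j, S j ⊆ Set.Ioo 0 1) ∧
        (Pairwise fun j k => Disjoint (S j) (S k)) ∧ (⋃ j, S j) = Set.Ioo 0 1 ∧
        u = ∑ j, eMul p (S j) (a j)}

/-- The family of seminorms `max (p_i, q_j)` generating the product topology on `E × F`. -/
def prodSeminorm (p : ι → Seminorm ℝ E) (q : κ → Seminorm ℝ F) :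
    ι × κ → Seminorm ℝ (E × F) :=
  fun ij => (p ij.1).comp (LinearMap.fst ℝ E F) ⊔ (q ij.2).comp (LinearMap.snd ℝ E F)

lemma prodSeminorm_apply (p : ι → Seminorm ℝ E) (q : κ → Seminorm ℝ F) (i : ι) (j : κ)
    (x : E × F) : prodSeminorm p q (i, j) x = max (p i x.1) (q j x.2) := by
  simp [prodSeminorm, Seminorm.sup_apply, Seminorm.comp_apply]

/-- First component of a moderate net in `E × F`, as a moderate net in `E`. -/
def prodFstAux [Nonempty κ] (p : ι → Seminorm ℝ E) (q : κ → Seminorm ℝ F) :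
    moderateGroup (prodSeminorm p q) →+ moderateGroup p where
  toFun w := ⟨fun ε => ((w : ℝ → E × F) ε).1, by
    have hw : IsModerate (prodSeminorm p q) (w : ℝ → E × F) := w.2
    intro i
    obtain ⟨j⟩ := ‹Nonempty κ›
    obtain ⟨M, hM⟩ := hw (i, j)
    refine ⟨M, ?_⟩
    filter_upwards [hM] with ε hε
    calc p i (((w : ℝ → E × F) ε).1) ≤ prodSeminorm p q (i, j) ((w : ℝ → E × F) ε) := by
          rw [prodSeminorm_apply]; exact le_max_left _ _
      _ ≤ ε ^ (-(M : ℤ)) := hε⟩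
  map_zero' := by apply Subtype.ext; funext ε; simp
  map_add' u v := by apply Subtype.ext; funext ε; simp

/-- Second component of a moderate net in `E × F`, as a moderate net in `F`. -/
def prodSndAux [Nonempty ι] (p : ι → Seminorm ℝ E) (q : κ → Seminorm ℝ F) :
    moderateGroup (prodSeminorm p q) →+ moderateGroup q where
  toFun w := ⟨fun ε => ((w : ℝ → E × F) ε).2, by
    have hw : IsModerate (prodSeminorm p q) (w : ℝ → E × F) := w.2
    intro j
    obtain ⟨i⟩ := ‹Nonempty ι›
    obtain ⟨M, hM⟩ := hw (i, j)
    refine ⟨M, ?_⟩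
    filter_upwards [hM] with ε hε
    calc q j (((w : ℝ → E × F) ε).2) ≤ prodSeminorm p q (i, j) ((w : ℝ → E × F) ε) := by
          rw [prodSeminorm_apply]; exact le_max_right _ _
      _ ≤ ε ^ (-(M : ℤ)) := hε⟩
  map_zero' := by apply Subtype.ext; funext ε; simp
  map_add' u v := by apply Subtype.ext; funext ε; simp

/-- The canonical identification `𝒢_{E × F} ≅ 𝒢_E × 𝒢_F` (given on representatives by
`[(u_ε, v_ε)] ↦ ([(u_ε)], [(v_ε)])`). -/
def prodIdent [Nonempty ι] [Nonempty κ] (p : ι → Seminorm ℝ E) (q : κ → Seminorm ℝ F) :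
    Colombeau (prodSeminorm p q) →+ Colombeau p × Colombeau q :=
  QuotientAddGroup.lift (negligibleGroup (prodSeminorm p q))
    (((QuotientAddGroup.mk' (negligibleGroup p)).comp (prodFstAux p q)).prod
      ((QuotientAddGroup.mk' (negligibleGroup q)).comp (prodSndAux p q)))
    (by
      intro w hw
      have hw' : IsNegligible (prodSeminorm p q) (w : ℝ → E × F) := hw
      rw [AddMonoidHom.mem_ker]
      refine Prod.ext ?_ ?_
      · show (QuotientAddGroup.mk' (negligibleGroup p)) (prodFstAux p q w) = 0
        rw [QuotientAddGroup.mk'_apply, QuotientAddGroup.eq_zero_iff]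
        show IsNegligible p _
        intro i m
        obtain ⟨j⟩ := ‹Nonempty κ›
        filter_upwards [hw' (i, j) m] with ε hε
        calc p i (((w : ℝ → E × F) ε).1)
            ≤ prodSeminorm p q (i, j) ((w : ℝ → E × F) ε) := by
              rw [prodSeminorm_apply]; exact le_max_left _ _
          _ ≤ ε ^ m := hε
      · show (QuotientAddGroup.mk' (negligibleGroup q)) (prodSndAux p q w) = 0
        rw [QuotientAddGroup.mk'_apply, QuotientAddGroup.eq_zero_iff]
        show IsNegligible q _
        intro j m
        obtain ⟨i⟩ := ‹Nonempty ι›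
        filter_upwards [hw' (i, j) m] with ε hε
        calc q j (((w : ℝ → E × F) ε).2)
            ≤ prodSeminorm p q (i, j) ((w : ℝ → E × F) ε) := by
              rw [prodSeminorm_apply]; exact le_max_right _ _
          _ ≤ ε ^ m := hε)

/-- A subset of `𝒢_E × 𝒢_F` is internal if, under the canonical identification
`𝒢_{E×F} ≅ 𝒢_E × 𝒢_F`, it corresponds to an internal subset of `𝒢_{E×F}`. -/
def IsInternalProd [Nonempty ι] [Nonempty κ] (p : ι → Seminorm ℝ E) (q : κ → Seminorm ℝ F)
    (C : Set (Colombeau p × Colombeau q)) : Prop :=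
  ∃ Cnet : ℝ → Set (E × F),
    C = prodIdent p q '' internalSet (prodSeminorm p q) Cnet

section Normed

variable (V : Type*) [NormedAddCommGroup V] [NormedSpace ℝ V]

/-- The norm of a normed space, as a one-element family of seminorms. -/
abbrev normFamily : Unit → Seminorm ℝ V := fun _ => normSeminorm ℝ V

/-- The Colombeau space based on a normed space `V`. -/
abbrev GN := Colombeau (normFamily V)

variable {V}

/-- `‖u‖ ≤ α ^ t` in `ℝ̃`, where `α` is the class of `(ε)_ε`. -/
def normLeAlpha (u : GN V) (t : ℝ) : Prop :=
  ∃ (w : moderateGroup (normFamily V)) (n : ℝ → ℝ),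
    (QuotientAddGroup.mk w : GN V) = u ∧ IsNegligibleR n ∧
    ∀ᶠ ε in 𝓝[>] (0 : ℝ), ‖(w : ℝ → V) ε‖ ≤ ε ^ t + n ε

/-- `‖u‖ ≤ ‖v‖` in `ℝ̃`. -/
def normLeNorm (u v : GN V) : Prop :=
  ∃ (a b : moderateGroup (normFamily V)) (n : ℝ → ℝ),
    (QuotientAddGroup.mk a : GN V) = u ∧ (QuotientAddGroup.mk b : GN V) = v ∧
    IsNegligibleR n ∧
    ∀ᶠ ε in 𝓝[>] (0 : ℝ), ‖(a : ℝ → V) ε‖ ≤ ‖(b : ℝ → V) ε‖ + n ε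

/-- A subset `A ⊆ 𝒢_V` is sharply bounded if `‖u‖ ≤ α^{-M}` for some `M ∈ ℕ` and all `u ∈ A`. -/
def SharplyBounded (A : Set (GN V)) : Prop :=
  ∃ M : ℕ, ∀ u ∈ A, normLeAlpha u (-(M : ℝ))

/-- A sharply bounded net of subsets of the normed space `V`. -/
def SharplyBoundedNetN (A : ℝ → Set V) : Prop :=
  ∃ M : ℕ, ∀ᶠ ε in 𝓝[>] (0 : ℝ), ∀ w ∈ A ε, ‖w‖ ≤ ε ^ (-(M : ℤ))

end Normed

/-! If `u = [(v_ε)]` with `v_ε ∈ A_ε`, then `d_n(w_ε, A_ε) ≤ p_n(w_ε - v_ε)` for every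
representative `w`, so the distance nets are negligible. Conversely, for each fixed `k` there are
`v ∈ A_ε` with `p_k(w_ε - v) < ε ^ k` for small `ε`; a diagonal choice of `k = κ(ε) → ∞` gives a
net `v_ε ∈ A_ε`, and since the `p_n` increase, `w - v` is negligible, so `[(v_ε)] = [(w_ε)]`. -/

def HasNegligibleDist (p : ι → Seminorm ℝ E) (A : ℝ → Set E) (w : ℝ → E) : Prop :=
  ∀ i, ∀ m : ℕ, ∀ᶠ ε in 𝓝[>] (0 : ℝ), semiDist p i (w ε) (A ε) ≤ ((ε ^ m : ℝ) : EReal)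

lemma IsNegligible.isModerate {p : ι → Seminorm ℝ E} {u : ℝ → E} (hu : IsNegligible p u) :
    IsModerate p u :=
  fun i => ⟨0, by simpa using hu i 0⟩

lemma mk_eq_mk_iff {p : ι → Seminorm ℝ E} {v w : moderateGroup p} :
    (QuotientAddGroup.mk v : Colombeau p) = QuotientAddGroup.mk w ↔
      IsNegligible p ((w : ℝ → E) - v) := by
  rw [QuotientAddGroup.eq, sub_eq_neg_add]
  rfl

lemma semiDist_le_of_mem {p : ι → Seminorm ℝ E} {i : ι} {u v : E} {A : Set E} (hv : v ∈ A) :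
    semiDist p i u A ≤ ((p i (u - v) : ℝ) : EReal) :=
  iInf₂_le v hv

lemma exists_lt_of_semiDist_lt {p : ι → Seminorm ℝ E} {i : ι} {u : E} {A : Set E} {r : ℝ}
    (h : semiDist p i u A < r) : ∃ v ∈ A, p i (u - v) < r := by
  simpa only [semiDist, iInf_lt_iff, EReal.coe_lt_coe_iff, exists_prop] using h

lemma hasNegligibleDist_of_mk_mem_internalSet {p : ι → Seminorm ℝ E} {A : ℝ → Set E}
    {w : moderateGroup p} (hw : (QuotientAddGroup.mk w : Colombeau p) ∈ internalSet p A) :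
    HasNegligibleDist p A w := by
  obtain ⟨v, hvw, hvA⟩ := hw
  intro i m
  filter_upwards [mk_eq_mk_iff.mp hvw i m, hvA] with ε hclose hmem
  exact (semiDist_le_of_mem hmem).trans (EReal.coe_le_coe_iff.mpr hclose)

lemma exists_tendsto_atTop_eventually_diag {α : Type*} {l : Filter α} {b : α → ℕ}
    (hb : Tendsto b l atTop) {Q : ℕ → α → Prop} (hQ : ∀ k, ∀ᶠ x in l, Q k x) :
    ∃ κ : α → ℕ, Tendsto κ l atTop ∧ ∀ᶠ x in l, Q (κ x) x := by
  classical
  let Q' : ℕ → α → Prop := fun k x => ∀ j ∈ Set.Iic k, Q j x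
  have hQ' : ∀ k, ∀ᶠ x in l, Q' k x := fun k =>
    (eventually_all_finite (Set.finite_Iic k)).mpr fun j _ => hQ j
  -- `κ x` is the largest `k ≤ b x` with `Q 0 x, …, Q k x`; the bound `b` keeps it finite.
  refine ⟨fun x => Nat.findGreatest (fun k => Q' k x) (b x), ?_, ?_⟩
  · refine tendsto_atTop.mpr fun N => ?_
    filter_upwards [hQ' N, tendsto_atTop.mp hb N] with x hN hbN
    exact Nat.le_findGreatest (P := fun k => Q' k x) hbN hN
  · filter_upwards [hQ 0] with x h0
    exact Nat.findGreatest_spec (P := fun k => Q' k x) (Nat.zero_le (b x))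
      (fun j hj => by rwa [Nat.le_zero.mp hj]) _ (Set.mem_Iic.mpr le_rfl)

lemma tendsto_natFloor_inv_nhdsGT_zero : Tendsto (fun ε : ℝ => ⌊ε⁻¹⌋₊) (𝓝[>] 0) atTop :=
  tendsto_nat_floor_atTop.comp tendsto_inv_nhdsGT_zero

lemma mk_mem_internalSet_of_hasNegligibleDist {p : ℕ → Seminorm ℝ E} (hp : Monotone p)
    {A : ℝ → Set E} {w : moderateGroup p} (hw : HasNegligibleDist p A w) :
    (QuotientAddGroup.mk w : Colombeau p) ∈ internalSet p A := by
  have happrox : ∀ k, ∀ᶠ ε in 𝓝[>] (0 : ℝ), ∃ v ∈ A ε, p k ((w : ℝ → E) ε - v) < ε ^ k := by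
    intro k
    filter_upwards [hw k (k + 1), Ioo_mem_nhdsGT one_pos] with ε hdist hε
    refine exists_lt_of_semiDist_lt (hdist.trans_lt (EReal.coe_lt_coe_iff.mpr ?_))
    exact pow_lt_pow_right_of_lt_one₀ hε.1 hε.2 k.lt_succ_self
  obtain ⟨κ, hκ, hκapprox⟩ :=
    exists_tendsto_atTop_eventually_diag tendsto_natFloor_inv_nhdsGT_zero happrox
  let v : ℝ → E := fun ε =>
    Classical.epsilon fun x => x ∈ A ε ∧ p (κ ε) ((w : ℝ → E) ε - x) < ε ^ κ ε
  have hv : ∀ᶠ ε in 𝓝[>] (0 : ℝ), v ε ∈ A ε ∧ p (κ ε) ((w : ℝ → E) ε - v ε) < ε ^ κ ε :=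
    hκapprox.mono fun ε h => Classical.epsilon_spec h
  have hneg : IsNegligible p ((w : ℝ → E) - v) := by
    intro n m
    filter_upwards [hv, hκ.eventually_ge_atTop (max n m), Ioo_mem_nhdsGT one_pos]
      with ε hvε hκε hε
    calc p n ((w : ℝ → E) ε - v ε)
        ≤ p (κ ε) ((w : ℝ → E) ε - v ε) := hp (le_of_max_le_left hκε) _
      _ ≤ ε ^ κ ε := hvε.2.le
      _ ≤ ε ^ m := pow_le_pow_of_le_one hε.1.le hε.2.le (le_of_max_le_right hκε)
  have hv_mod : v ∈ moderateGroup p := by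
    simpa using sub_mem w.2 (hneg.isModerate : (w : ℝ → E) - v ∈ moderateGroup p)
  exact ⟨⟨v, hv_mod⟩, mk_eq_mk_iff.mpr hneg, hv.mono fun ε h => h.1⟩

/-- If the topology of `E` is generated by an increasing sequence of
seminorms `(p_n)`, the internal set `[(A_ε)]` admits the alternative description via
negligibility of the distance nets `(d_n(u_ε, A_ε))_ε`, and this description does not
depend on the chosen representative `(u_ε)` of `u`. -/
theorem internalSet_eq_dist_description
    {E : Type*} [AddCommGroup E] [Module ℝ E]
    (p : ℕ → Seminorm ℝ E) (hp : Monotone p) (A : ℝ → Set E) :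
    internalSet p A =
      {u : Colombeau p | ∀ w : moderateGroup p,
        (QuotientAddGroup.mk w : Colombeau p) = u →
        ∀ n m : ℕ, ∀ᶠ ε in 𝓝[>] (0 : ℝ),
          semiDist p n ((w : ℝ → E) ε) (A ε) ≤ ((ε ^ m : ℝ) : EReal)} ∧
    internalSet p A =
      {u : Colombeau p | ∃ w : moderateGroup p,
        (QuotientAddGroup.mk w : Colombeau p) = u ∧
        ∀ n m : ℕ, ∀ᶠ ε in 𝓝[>] (0 : ℝ),
          semiDist p n ((w : ℝ → E) ε) (A ε) ≤ ((ε ^ m : ℝ) : EReal)} := by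
  constructor <;> ext u <;> induction u using QuotientAddGroup.induction_on with | H w => ?_
  · refine ⟨fun hw v hvw => ?_, fun h => mk_mem_internalSet_of_hasNegligibleDist hp (h w rfl)⟩
    exact hasNegligibleDist_of_mk_mem_internalSet (hvw ▸ hw)
  · refine ⟨fun hw => ⟨w, rfl, hasNegligibleDist_of_mk_mem_internalSet hw⟩, ?_⟩
    rintro ⟨v, hvw, hv⟩
    exact hvw ▸ mk_mem_internalSet_of_hasNegligibleDist hp hv

end ColombeauPaper
end
end

section
/- Let E be a normed vector space and let A ⊆ G_E be internal and sharply bounded. Then A has a sharply bounded representative, i.e., there exists a sharply bounded net (Ã_ε)_{ε∈(0,1)} of subsets of E with A = [(Ã_ε)]. -/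
/-! Intersect `A_ε` with the ball of radius `ε^{-(M+1)}`, where `α^{-M}` bounds `A`. This does
not change `[(A_ε)]`: two representatives of the same element differ by a negligible net, so
every representative of an element of `A` has norm at most `ε^{-M} + O(ε)`, which is below
`ε^{-(M+1)}` for small `ε`. -/

open Filter Topology Asymptotics

noncomputable section

namespace ColombeauPaper

variable {ι κ : Type*} {E : Type*} [AddCommGroup E] [Module ℝ E]
  {F : Type*} [AddCommGroup F] [Module ℝ F]

theorem internalSet_mono (p : ι → Seminorm ℝ E) {A B : ℝ → Set E} (h : ∀ ε, A ε ⊆ B ε) :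
    internalSet p A ⊆ internalSet p B := by
  rintro u ⟨w, rfl, hw⟩
  exact ⟨w, rfl, hw.mono fun ε hε => h ε hε⟩

theorem internalSet_inter_eq (p : ι → Seminorm ℝ E) {A B : ℝ → Set E}
    (hB : ∀ w : moderateGroup p, (QuotientAddGroup.mk w : Colombeau p) ∈ internalSet p A →
      ∀ᶠ ε in 𝓝[>] (0 : ℝ), (w : ℝ → E) ε ∈ B ε) :
    internalSet p (fun ε => A ε ∩ B ε) = internalSet p A := by
  refine (internalSet_mono p fun ε => Set.inter_subset_left).antisymm ?_
  rintro u ⟨w, rfl, hw⟩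
  exact ⟨w, rfl, hw.and (hB w ⟨w, rfl, hw⟩)⟩

theorem eventually_le_add_pow_of_mk_eq (p : ι → Seminorm ℝ E) {w a : moderateGroup p}
    (h : (QuotientAddGroup.mk w : Colombeau p) = QuotientAddGroup.mk a) (i : ι) (m : ℕ) :
    ∀ᶠ ε in 𝓝[>] (0 : ℝ), p i ((w : ℝ → E) ε) ≤ p i ((a : ℝ → E) ε) + ε ^ m := by
  have hneg : IsNegligible p ((w - a : moderateGroup p) : ℝ → E) :=
    QuotientAddGroup.eq_iff_sub_mem.1 h
  filter_upwards [hneg i m] with ε hε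
  calc p i ((w : ℝ → E) ε) = p i ((a : ℝ → E) ε + ((w : ℝ → E) ε - (a : ℝ → E) ε)) := by
        rw [add_sub_cancel]
    _ ≤ p i ((a : ℝ → E) ε) + p i ((w : ℝ → E) ε - (a : ℝ → E) ε) := map_add_le_add _ _ _
    _ ≤ p i ((a : ℝ → E) ε) + ε ^ m := by gcongr; exact hε

theorem normLeAlpha.eventually_norm_le {V : Type*} [NormedAddCommGroup V] [NormedSpace ℝ V]
    {u : GN V} {t : ℝ} (hu : normLeAlpha u t) {w : moderateGroup (normFamily V)}
    (hw : (QuotientAddGroup.mk w : GN V) = u) :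
    ∀ᶠ ε in 𝓝[>] (0 : ℝ), ‖(w : ℝ → V) ε‖ ≤ ε ^ t + 2 * ε := by
  obtain ⟨a, n, rfl, hn, ha⟩ := hu
  filter_upwards [ha, hn 1, eventually_le_add_pow_of_mk_eq _ hw () 1] with ε haε hnε hwε
  simp only [normFamily, coe_normSeminorm, pow_one] at hwε hnε
  linarith [le_of_abs_le hnε]

theorem rpow_neg_natCast_add_two_mul_le {ε : ℝ} (hε : 0 < ε) (hε' : ε ≤ 1 / 2) (M : ℕ) :
    ε ^ (-(M : ℝ)) + 2 * ε ≤ ε ^ (-((M + 1 : ℕ) : ℤ)) := by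
  rw [Real.rpow_neg hε.le, Real.rpow_natCast, zpow_neg, zpow_natCast, ← inv_pow, ← inv_pow,
    pow_succ]
  have h2 : 2 ≤ ε⁻¹ := by rw [le_inv_comm₀ two_pos hε]; linarith
  have h1 : 1 ≤ ε⁻¹ ^ M := one_le_pow₀ (by linarith)
  nlinarith

/-- An internal, sharply bounded subset of `𝒢_E`, `E` a normed space,
has a sharply bounded representative net. -/
theorem exists_sharplyBounded_representative
    {V : Type*} [NormedAddCommGroup V] [NormedSpace ℝ V]
    (A : Set (GN V)) (hA : IsInternal (normFamily V) A) (hb : SharplyBounded A) :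
    ∃ Anet : ℝ → Set V, SharplyBoundedNetN Anet ∧ A = internalSet (normFamily V) Anet := by
  obtain ⟨Anet, rfl⟩ := hA
  obtain ⟨M, hM⟩ := hb
  refine ⟨fun ε => Anet ε ∩ Metric.closedBall 0 (ε ^ (-((M + 1 : ℕ) : ℤ))), ⟨M + 1, ?_⟩, ?_⟩
  · exact Eventually.of_forall fun ε w hw => mem_closedBall_zero_iff.1 hw.2
  · refine (internalSet_inter_eq _ fun w hw => ?_).symm
    filter_upwards [(hM _ hw).eventually_norm_le rfl, small_mem] with ε hε hsmall
    exact mem_closedBall_zero_iff.2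
      (hε.trans (rpow_neg_natCast_add_two_mul_le hsmall.1 hsmall.2 M))

end ColombeauPaper
end
end

section
/- Let E be a normed vector space. (1) If A is a non-empty internal subset of G_E and u ∈ G_E, then there exists a ∈ A with ‖u−a‖ ≤ ‖u−v‖ for all v ∈ A. (2) If A is a sharply bounded, non-empty internal subset of G_E, then {‖u‖ : u∈A} reaches a maximum in R̃: there exists a ∈ A with ‖v‖ ≤ ‖a‖ for all v ∈ A. (3) A sharply bounded, non-empty internal subset of G_E is not open in the sharp topology. -/
open Filter Topology Asymptotics

noncomputable section

namespace ColombeauPaper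

variable {ι κ : Type*} {E : Type*} [AddCommGroup E] [Module ℝ E]
  {F : Type*} [AddCommGroup F] [Module ℝ F]

/-! For (1) and (2), choose for each `ε` a point of `A_ε` whose distance to `u_ε` (resp. whose
norm) is optimal up to one fixed positive negligible slack `fastDecay ε`; the infimum or supremum
need not be attained, but this net is moderate and its class is optimal in `ℝ̃`.

For (3), a maximiser `a = [(w_ε)]` of the norm on `A` is never an interior point: moving `w_ε`
outwards along its own direction by `ε ^ K` (any unit vector if `w_ε = 0`) gives a point within
sharp distance `e ^ (-K)` of `a`, hence in `A` for large `K`, whose norm exceeds `‖a‖` by `α ^ K`,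
which is not negligible. -/

lemma zpow_neg_add_one_le_zpow_neg_succ {ε : ℝ} (h0 : 0 < ε) (h12 : ε ≤ 1 / 2) (M : ℕ) :
    ε ^ (-(M : ℤ)) + 1 ≤ ε ^ (-((M + 1 : ℕ) : ℤ)) := by
  have hinv : 2 ≤ ε⁻¹ := by rw [le_inv_comm₀ two_pos h0]; linarith
  have hone : 1 ≤ ε ^ (-(M : ℤ)) := by
    rw [zpow_neg, zpow_natCast]
    exact one_le_inv₀ (pow_pos h0 M) |>.2 (pow_le_one₀ h0.le (by linarith))
  calc ε ^ (-(M : ℤ)) + 1 ≤ ε ^ (-(M : ℤ)) * 2 := by linarith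
    _ ≤ ε ^ (-(M : ℤ)) * ε⁻¹ := by gcongr
    _ = ε ^ (-((M + 1 : ℕ) : ℤ)) := by
      rw [← zpow_neg_one, ← zpow_add₀ h0.ne']; push_cast; ring_nf

lemma rpow_isBigO_rpow_of_le {b b' : ℝ} (h : b ≤ b') :
    (fun ε : ℝ => ε ^ b') =O[𝓝[>] (0 : ℝ)] fun ε => ε ^ b := by
  refine IsBigO.of_bound 1 ?_
  filter_upwards [small_mem] with ε ⟨h0, h12⟩
  rw [one_mul, Real.norm_of_nonneg (Real.rpow_nonneg h0.le _),
    Real.norm_of_nonneg (Real.rpow_nonneg h0.le _)]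
  exact Real.rpow_le_rpow_of_exponent_ge h0 (by linarith) h

lemma IsNegligibleR.add {n n' : ℝ → ℝ} (hn : IsNegligibleR n) (hn' : IsNegligibleR n') :
    IsNegligibleR (n + n') := by
  intro m
  filter_upwards [hn (m + 1), hn' (m + 1), small_mem] with ε h h' ⟨h0, h12⟩
  calc |(n + n') ε| ≤ |n ε| + |n' ε| := abs_add_le _ _
    _ ≤ ε ^ m * ε + ε ^ m * ε := by rw [← pow_succ]; exact add_le_add h h'
    _ ≤ ε ^ m := by nlinarith [pow_nonneg h0.le m]

lemma IsNegligibleR.not_eventually_pow_le {n : ℝ → ℝ} (hn : IsNegligibleR n) (K : ℕ) :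
    ¬ ∀ᶠ ε in 𝓝[>] (0 : ℝ), ε ^ K ≤ n ε := by
  intro h
  have hcontra : ∀ᶠ ε in 𝓝[>] (0 : ℝ), False := by
    filter_upwards [h, hn (K + 1), small_mem] with ε hle hsmall ⟨h0, h12⟩
    have : ε ^ K ≤ ε ^ K * ε := by
      rw [← pow_succ]; exact hle.trans ((le_abs_self _).trans hsmall)
    nlinarith [pow_pos h0 K]
  exact hcontra.exists.elim fun _ => id

def fastDecay (ε : ℝ) : ℝ := ε ^ ⌈ε⁻¹⌉₊

lemma fastDecay_pos {ε : ℝ} (h0 : 0 < ε) : 0 < fastDecay ε := pow_pos h0 _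

lemma fastDecay_le_one {ε : ℝ} (h0 : 0 < ε) (h1 : ε ≤ 1) : fastDecay ε ≤ 1 :=
  pow_le_one₀ h0.le h1

lemma isNegligibleR_fastDecay : IsNegligibleR fastDecay := by
  intro m
  have hsmall : ∀ᶠ ε in 𝓝[>] (0 : ℝ), ε < ((m : ℝ) + 1)⁻¹ :=
    eventually_nhdsWithin_of_eventually_nhds (eventually_lt_nhds (by positivity))
  filter_upwards [hsmall, self_mem_nhdsWithin] with ε hε (h0 : 0 < ε)
  have hm : m < ⌈ε⁻¹⌉₊ := Nat.lt_ceil.2 (by linarith [(lt_inv_comm₀ h0 (by positivity)).1 hε])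
  have h1 : ε ≤ 1 := hε.le.trans (inv_le_one_of_one_le₀ (by linarith [m.cast_nonneg (α := ℝ)]))
  rw [abs_of_pos (fastDecay_pos h0)]
  exact pow_le_pow_of_le_one h0.le h1 hm.le

lemma exists_eventually_almost_minimizer {T X : Type*} [Nonempty X] {l : Filter T}
    (φ : T → X → ℝ) (A : T → Set X) {δ : T → ℝ} (hδ : ∀ᶠ t in l, 0 < δ t)
    (hne : ∀ᶠ t in l, (A t).Nonempty) (hbdd : ∀ t, BddBelow (φ t '' A t)) :
    ∃ f : T → X, ∀ᶠ t in l, f t ∈ A t ∧ ∀ x ∈ A t, φ t (f t) ≤ φ t x + δ t := by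
  have hchoice : ∀ t, ∃ y : X, 0 < δ t ∧ (A t).Nonempty →
      y ∈ A t ∧ φ t y < sInf (φ t '' A t) + δ t := by
    intro t
    by_cases h : 0 < δ t ∧ (A t).Nonempty
    · obtain ⟨_, ⟨y, hy, rfl⟩, hlt⟩ := Real.lt_sInf_add_pos (h.2.image (φ t)) h.1
      exact ⟨y, fun _ => ⟨hy, hlt⟩⟩
    · exact ⟨Classical.arbitrary X, fun h' => absurd h' h⟩
  choose f hf using hchoice
  refine ⟨f, ?_⟩
  filter_upwards [hδ, hne] with t hδt hnet
  obtain ⟨hmem, hlt⟩ := hf t ⟨hδt, hnet⟩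
  exact ⟨hmem, fun x hx => by linarith [csInf_le (hbdd t) (Set.mem_image_of_mem (φ t) hx)]⟩

section Sharp

variable {p : ι → Seminorm ℝ E} {i : ι}

lemma sharpSemi_le_of_isBigO {x : Colombeau p} {w : moderateGroup p}
    (hw : (QuotientAddGroup.mk w : Colombeau p) = x) {b : ℝ}
    (h : (fun ε => p i ((w : ℝ → E) ε)) =O[𝓝[>] (0 : ℝ)] fun ε => ε ^ b) :
    sharpSemi p i x ≤ Real.exp (-b) :=
  csInf_le ⟨0, by rintro _ ⟨b, w, -, rfl, -⟩; positivity⟩ ⟨b, w, hw, rfl, h⟩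

lemma exists_isBigO_of_sharpSemi_lt {x : Colombeau p} {r : ℝ} (h : sharpSemi p i x < r) :
    ∃ (b : ℝ) (w : moderateGroup p), (QuotientAddGroup.mk w : Colombeau p) = x ∧
      Real.exp (-b) < r ∧ (fun ε => p i ((w : ℝ → E) ε)) =O[𝓝[>] (0 : ℝ)] fun ε => ε ^ b := by
  obtain ⟨w, rfl⟩ := QuotientAddGroup.mk_surjective x
  obtain ⟨M, hM⟩ := (w.2 : IsModerate p (w : ℝ → E)) i
  -- Moderateness makes the defining set nonempty; `sInf ∅ = 0` would give no witness.
  have hO : (fun ε => p i ((w : ℝ → E) ε)) =O[𝓝[>] (0 : ℝ)] fun ε => ε ^ (-(M : ℝ)) := by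
    refine IsBigO.of_bound 1 ?_
    filter_upwards [hM, self_mem_nhdsWithin] with ε hε (h0 : 0 < ε)
    rw [one_mul, Real.norm_of_nonneg (apply_nonneg _ _),
      Real.norm_of_nonneg (Real.rpow_nonneg h0.le _), Real.rpow_neg_natCast]
    exact hε
  obtain ⟨_, ⟨b, w', hw', rfl, hO'⟩, hlt⟩ :=
    exists_lt_of_csInf_lt (by exact ⟨_, _, w, rfl, rfl, hO⟩) h
  exact ⟨b, w', hw', hlt, hO'⟩

lemma sharpSemi_add_lt {x y : Colombeau p} {r : ℝ} (hx : sharpSemi p i x < r)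
    (hy : sharpSemi p i y < r) : sharpSemi p i (x + y) < r := by
  obtain ⟨b₁, w₁, rfl, hr₁, hO₁⟩ := exists_isBigO_of_sharpSemi_lt hx
  obtain ⟨b₂, w₂, rfl, hr₂, hO₂⟩ := exists_isBigO_of_sharpSemi_lt hy
  have hO : (fun ε => p i (((w₁ + w₂ : moderateGroup p) : ℝ → E) ε))
      =O[𝓝[>] (0 : ℝ)] fun ε => ε ^ min b₁ b₂ := by
    refine (isBigO_of_le _ fun ε => ?_).trans
      ((hO₁.trans (rpow_isBigO_rpow_of_le (min_le_left _ _))).add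
        (hO₂.trans (rpow_isBigO_rpow_of_le (min_le_right _ _))))
    rw [Real.norm_of_nonneg (apply_nonneg _ _),
      Real.norm_of_nonneg (add_nonneg (apply_nonneg _ _) (apply_nonneg _ _))]
    exact map_add_le_add (p i) _ _
  refine (sharpSemi_le_of_isBigO (QuotientAddGroup.mk_add _ w₁ w₂).symm hO).trans_lt ?_
  rcases min_choice b₁ b₂ with h | h <;> rwa [h]

end Sharp

lemma exists_sharpBall_subset_of_isOpen {p : Unit → Seminorm ℝ E} {A : Set (Colombeau p)}
    (hA : IsOpen[sharpTopology p] A) :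
    ∀ a ∈ A, ∃ r > 0, ∀ v, sharpSemi p () (v - a) < r → v ∈ A := by
  induction hA with
  | basic s hs =>
    obtain ⟨u, ⟨⟩, r, hr, rfl⟩ := hs
    intro a ha
    refine ⟨r, hr, fun v hv => ?_⟩
    have hsum := sharpSemi_add_lt hv ha
    rwa [sub_add_sub_cancel] at hsum
  | univ => exact fun _ _ => ⟨1, one_pos, fun _ _ => trivial⟩
  | inter s t _ _ ihs iht =>
    intro a ha
    obtain ⟨r₁, hr₁, h₁⟩ := ihs a ha.1
    obtain ⟨r₂, hr₂, h₂⟩ := iht a ha.2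
    exact ⟨min r₁ r₂, lt_min hr₁ hr₂, fun v hv =>
      ⟨h₁ v (hv.trans_le (min_le_left _ _)), h₂ v (hv.trans_le (min_le_right _ _))⟩⟩
  | sUnion S _ ih =>
    rintro a ⟨t, htS, hat⟩
    obtain ⟨r, hr, h⟩ := ih t htS a hat
    exact ⟨r, hr, fun v hv => ⟨t, htS, h v hv⟩⟩

section NormedColombeau

variable {V : Type*} [NormedAddCommGroup V] [NormedSpace ℝ V]

lemma isModerate_of_eventually_norm_le_add_one {u g : ℝ → V}
    (hg : IsModerate (normFamily V) g) (h : ∀ᶠ ε in 𝓝[>] (0 : ℝ), ‖u ε‖ ≤ ‖g ε‖ + 1) :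
    IsModerate (normFamily V) u := by
  obtain ⟨M, hM⟩ := hg ()
  refine fun _ => ⟨M + 1, ?_⟩
  filter_upwards [hM, h, small_mem] with ε hgε huε ⟨h0, h12⟩
  change ‖g ε‖ ≤ _ at hgε
  show ‖u ε‖ ≤ _
  linarith [zpow_neg_add_one_le_zpow_neg_succ h0 h12 M]

lemma isNegligibleR_norm_sub_of_mk_eq {w w' : moderateGroup (normFamily V)}
    (h : (QuotientAddGroup.mk w : GN V) = QuotientAddGroup.mk w') :
    IsNegligibleR fun ε => ‖(w : ℝ → V) ε - (w' : ℝ → V) ε‖ := by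
  have hw : IsNegligible (normFamily V) ((w - w' : moderateGroup (normFamily V)) : ℝ → V) :=
    QuotientAddGroup.eq_iff_sub_mem.1 h
  intro m
  filter_upwards [hw () m] with ε hε
  rwa [abs_norm]

lemma normLeNorm_mk_iff {a b : moderateGroup (normFamily V)} :
    normLeNorm (QuotientAddGroup.mk a : GN V) (QuotientAddGroup.mk b) ↔
      ∃ n, IsNegligibleR n ∧
        ∀ᶠ ε in 𝓝[>] (0 : ℝ), ‖(a : ℝ → V) ε‖ ≤ ‖(b : ℝ → V) ε‖ + n ε := by
  refine ⟨fun ⟨a', b', n, ha, hb, hn, hle⟩ => ?_, fun ⟨n, hn, hle⟩ => ⟨a, b, n, rfl, rfl, hn, hle⟩⟩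
  refine ⟨_, ((isNegligibleR_norm_sub_of_mk_eq ha.symm).add hn).add
    (isNegligibleR_norm_sub_of_mk_eq hb), ?_⟩
  filter_upwards [hle] with ε hε
  simp only [Pi.add_apply]
  linarith [norm_le_insert' ((a : ℝ → V) ε) ((a' : ℝ → V) ε),
    norm_le_insert' ((b' : ℝ → V) ε) ((b : ℝ → V) ε)]

lemma normLeAlpha_mk_iff {w : moderateGroup (normFamily V)} {t : ℝ} :
    normLeAlpha (QuotientAddGroup.mk w : GN V) t ↔
      ∃ n, IsNegligibleR n ∧ ∀ᶠ ε in 𝓝[>] (0 : ℝ), ‖(w : ℝ → V) ε‖ ≤ ε ^ t + n ε := by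
  refine ⟨fun ⟨w', n, hw, hn, hle⟩ => ?_, fun ⟨n, hn, hle⟩ => ⟨w, n, rfl, hn, hle⟩⟩
  refine ⟨_, hn.add (isNegligibleR_norm_sub_of_mk_eq hw.symm), ?_⟩
  filter_upwards [hle] with ε hε
  simp only [Pi.add_apply]
  linarith [norm_le_insert' ((w : ℝ → V) ε) ((w' : ℝ → V) ε)]

lemma exists_mem_internalSet_forall_normLeNorm_sub (Anet : ℝ → Set V)
    (hne : (internalSet (normFamily V) Anet).Nonempty) (u : GN V) :
    ∃ a ∈ internalSet (normFamily V) Anet,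
      ∀ v ∈ internalSet (normFamily V) Anet, normLeNorm (u - a) (u - v) := by
  obtain ⟨-, b, rfl, hb⟩ := hne
  obtain ⟨u, rfl⟩ := QuotientAddGroup.mk_surjective u
  obtain ⟨f, hf⟩ := exists_eventually_almost_minimizer (l := 𝓝[>] (0 : ℝ))
    (fun ε x => ‖(u : ℝ → V) ε - x‖) Anet
    (eventually_mem_nhdsWithin.mono fun _ => fastDecay_pos) (hb.mono fun _ h => ⟨_, h⟩)
    (fun _ => ⟨0, by rintro _ ⟨x, -, rfl⟩; positivity⟩)
  have hdist : IsModerate (normFamily V) fun ε => (u : ℝ → V) ε - f ε := by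
    refine isModerate_of_eventually_norm_le_add_one (u - b).2 ?_
    filter_upwards [hf, hb, small_mem] with ε ⟨_, hmin⟩ hbε ⟨h0, h12⟩
    change _ ≤ ‖(u : ℝ → V) ε - (b : ℝ → V) ε‖ + 1
    linarith [hmin _ hbε, fastDecay_le_one h0 (by linarith)]
  have hf_mod : IsModerate (normFamily V) f := by
    have h := (u - ⟨_, hdist⟩ : moderateGroup (normFamily V)).2
    simp only [AddSubgroup.coe_sub, Pi.sub_def, sub_sub_cancel] at h
    exact h
  refine ⟨QuotientAddGroup.mk ⟨f, hf_mod⟩, ⟨_, rfl, hf.mono fun _ h => h.1⟩, ?_⟩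
  rintro _ ⟨v, rfl, hv⟩
  rw [← QuotientAddGroup.mk_sub, ← QuotientAddGroup.mk_sub, normLeNorm_mk_iff]
  refine ⟨fastDecay, isNegligibleR_fastDecay, ?_⟩
  filter_upwards [hf, hv] with ε ⟨_, hmin⟩ hvε
  exact hmin _ hvε

lemma exists_mem_internalSet_forall_normLeNorm (Anet : ℝ → Set V)
    (hne : (internalSet (normFamily V) Anet).Nonempty)
    (hbdd : SharplyBounded (internalSet (normFamily V) Anet)) :
    ∃ a ∈ internalSet (normFamily V) Anet,
      ∀ v ∈ internalSet (normFamily V) Anet, normLeNorm v a := by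
  obtain ⟨M, hM⟩ := hbdd
  set B : ℝ → Set V := fun ε => Anet ε ∩ {x | ‖x‖ ≤ ε ^ (-((M + 1 : ℕ) : ℤ))}
  -- The truncation makes the `ε`-wise suprema finite without losing any member of the set.
  have hB : ∀ w : moderateGroup (normFamily V), (∀ᶠ ε in 𝓝[>] (0 : ℝ), (w : ℝ → V) ε ∈ Anet ε) →
      ∀ᶠ ε in 𝓝[>] (0 : ℝ), (w : ℝ → V) ε ∈ B ε := by
    intro w hw
    obtain ⟨n, hn, hle⟩ := normLeAlpha_mk_iff.1 (hM _ ⟨w, rfl, hw⟩)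
    filter_upwards [hw, hle, hn 0, small_mem] with ε hwε hleε hnε ⟨h0, h12⟩
    rw [Real.rpow_neg_natCast] at hleε
    rw [pow_zero] at hnε
    refine ⟨hwε, ?_⟩
    show ‖(w : ℝ → V) ε‖ ≤ ε ^ (-((M + 1 : ℕ) : ℤ))
    linarith [le_abs_self (n ε), zpow_neg_add_one_le_zpow_neg_succ h0 h12 M]
  obtain ⟨-, b, rfl, hb⟩ := hne
  obtain ⟨f, hf⟩ := exists_eventually_almost_minimizer (l := 𝓝[>] (0 : ℝ))
    (fun _ x => -‖x‖) B (eventually_mem_nhdsWithin.mono fun _ => fastDecay_pos)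
    ((hB b hb).mono fun _ h => ⟨_, h⟩)
    (fun _ => ⟨_, by rintro _ ⟨x, hx, rfl⟩; exact neg_le_neg hx.2⟩)
  have hf_mod : IsModerate (normFamily V) f := fun _ => ⟨M + 1, hf.mono fun _ h => h.1.2⟩
  refine ⟨QuotientAddGroup.mk ⟨f, hf_mod⟩, ⟨_, rfl, hf.mono fun _ h => h.1.1⟩, ?_⟩
  rintro _ ⟨v, rfl, hv⟩
  refine normLeNorm_mk_iff.2 ⟨fastDecay, isNegligibleR_fastDecay, ?_⟩
  filter_upwards [hf, hB v hv] with ε ⟨_, hmax⟩ hvε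
  linarith [hmax _ hvε]

lemma exists_norm_eq_one_sameRay [Nontrivial V] (x : V) : ∃ d : V, ‖d‖ = 1 ∧ SameRay ℝ x d := by
  rcases eq_or_ne x 0 with rfl | hx
  · obtain ⟨d, hd⟩ := exists_norm_eq V zero_le_one
    exact ⟨d, hd, SameRay.zero_left d⟩
  · exact ⟨‖x‖⁻¹ • x, norm_smul_inv_norm hx, SameRay.sameRay_nonneg_smul_right x (by positivity)⟩

lemma not_isOpen_of_forall_normLeNorm [Nontrivial V] {A : Set (GN V)} {a : GN V} (ha : a ∈ A)
    (hmax : ∀ v ∈ A, normLeNorm v a) : ¬ IsOpen[sharpTopology (normFamily V)] A := by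
  intro hA
  obtain ⟨r, hr, hball⟩ := exists_sharpBall_subset_of_isOpen hA _ ha
  obtain ⟨w, rfl⟩ := QuotientAddGroup.mk_surjective a
  choose d hd using exists_norm_eq_one_sameRay (V := V)
  obtain ⟨K, hK⟩ := exists_nat_gt (-Real.log r)
  have hnorm : ∀ ε : ℝ, 0 < ε → ‖ε ^ K • d ((w : ℝ → V) ε)‖ = ε ^ K := fun ε h0 => by
    rw [norm_smul, (hd _).1, mul_one, Real.norm_of_nonneg (by positivity)]
  have hz : IsModerate (normFamily V) fun ε => ε ^ K • d ((w : ℝ → V) ε) := by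
    refine isModerate_of_eventually_norm_le_add_one (moderateGroup _).zero_mem ?_
    filter_upwards [small_mem] with ε ⟨h0, h12⟩
    rw [hnorm ε h0, Pi.zero_apply, norm_zero, zero_add]
    exact pow_le_one₀ h0.le (by linarith)
  set z : moderateGroup (normFamily V) := ⟨_, hz⟩
  have hzA : (QuotientAddGroup.mk (w + z) : GN V) ∈ A := by
    refine hball _ ?_
    rw [QuotientAddGroup.mk_add, add_sub_cancel_left]
    have hO : (fun ε => normFamily V () ((z : ℝ → V) ε)) =O[𝓝[>] (0 : ℝ)]
        fun ε => ε ^ (K : ℝ) := by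
      refine EventuallyEq.trans_isBigO ?_ (isBigO_refl _ _)
      filter_upwards [self_mem_nhdsWithin] with ε (h0 : 0 < ε)
      rw [Real.rpow_natCast]
      exact hnorm ε h0
    calc sharpSemi (normFamily V) () (QuotientAddGroup.mk z) ≤ Real.exp (-K) :=
          sharpSemi_le_of_isBigO rfl hO
      _ < Real.exp (Real.log r) := Real.exp_lt_exp.2 (by linarith)
      _ = r := Real.exp_log hr
  obtain ⟨n, hn, hle⟩ := normLeNorm_mk_iff.1 (hmax _ hzA)
  refine hn.not_eventually_pow_le K ?_
  filter_upwards [hle, self_mem_nhdsWithin] with ε hε (h0 : 0 < ε)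
  have hgrow : ‖(w : ℝ → V) ε + ε ^ K • d ((w : ℝ → V) ε)‖ = ‖(w : ℝ → V) ε‖ + ε ^ K := by
    rw [((hd _).2.nonneg_smul_right (by positivity)).norm_add, hnorm ε h0]
  change ‖(w : ℝ → V) ε + ε ^ K • d ((w : ℝ → V) ε)‖ ≤ _ at hε
  linarith

end NormedColombeau

/-- For a normed space `E`: (1) the distance from a point to a nonempty
internal set is attained; (2) the `ℝ̃`-norm attains a maximum on a sharply bounded nonempty
internal set; (3) a sharply bounded nonempty internal set is not open in the sharp topology. -/
theorem min_attained_max_attained_not_open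
    {V : Type*} [NormedAddCommGroup V] [NormedSpace ℝ V] :
    (∀ A : Set (GN V), IsInternal (normFamily V) A → A.Nonempty → ∀ u : GN V,
      ∃ a ∈ A, ∀ v ∈ A, normLeNorm (u - a) (u - v)) ∧
    (∀ A : Set (GN V), IsInternal (normFamily V) A → A.Nonempty → SharplyBounded A →
      ∃ a ∈ A, ∀ v ∈ A, normLeNorm v a) ∧
    (Nontrivial V → ∀ A : Set (GN V), IsInternal (normFamily V) A → A.Nonempty →
      SharplyBounded A → ¬ @IsOpen _ (sharpTopology (normFamily V)) A) := by
  have hmax : ∀ A : Set (GN V), IsInternal (normFamily V) A → A.Nonempty → SharplyBounded A →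
      ∃ a ∈ A, ∀ v ∈ A, normLeNorm v a := by
    rintro A ⟨Anet, rfl⟩ hne hbdd
    exact exists_mem_internalSet_forall_normLeNorm Anet hne hbdd
  refine ⟨?_, hmax, fun _ A hA hne hbdd => ?_⟩
  · rintro A ⟨Anet, rfl⟩ hne u
    exact exists_mem_internalSet_forall_normLeNorm_sub Anet hne u
  · obtain ⟨a, ha, hle⟩ := hmax A hA hne hbdd
    exact not_isOpen_of_forall_normLeNorm ha hle

end ColombeauPaper
end
end
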